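/- Let L be a commutative integral quantale (the unit u is the top element 1) and let (P, e) be an algebraic L-dcpo, equipped with the interpolative generalized L-closure operator ⟨A⟩ = ⋁_{x∈P} A(x) ⊗ ⇓x. Then the set K(P) of compact elements is a dense subspace of (P, ⟨·⟩); that is, for all x, a ∈ P, ⟨1_x⟩(a) ≤ ⋁_{y∈K(P)} ⟨1_x⟩(y) ⊗ ⟨1_y⟩(a). -/
import Mathlib


universe u

/-- A commutative unital quantale structure on a complete lattice `L`. -/
structure CommQuantale (L : Type u) [CompleteLattice L] : Type u where
  mul : L → L → L
  mul_comm : ∀ a b, mul a b = mul b a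
  mul_assoc : ∀ a b c, mul (mul a b) c = mul a (mul b c)
  unit : L
  mul_unit : ∀ a, mul a unit = a
  mul_sSup : ∀ (a : L) (S : Set L), mul a (sSup S) = ⨆ s ∈ S, mul a s

namespace CommQuantale

variable {L : Type u} [CompleteLattice L]

/-- The residuation `b → c`, the right adjoint of `⊗`. -/
def res (Q : CommQuantale L) (b c : L) : L := sSup {a | Q.mul a b ≤ c}

/-- `sub(A,B) = ⋀ₓ (A x → B x)` for `L`-subsets. -/
def subL (Q : CommQuantale L) {X : Type u} (A B : X → L) : L :=
  ⨅ x, Q.res (A x) (B x)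

open Classical in
/-- The characteristic function `u_x`. -/
noncomputable def ux (Q : CommQuantale L) {X : Type u} (x : X) : X → L :=
  fun y => if y = x then Q.unit else ⊥

/-- `e` is an `L`-order on `P`. -/
def IsLOrder (Q : CommQuantale L) {P : Type u} (e : P → P → L) : Prop :=
  (∀ x, Q.unit ≤ e x x) ∧
  (∀ x y z, Q.mul (e x y) (e y z) ≤ e x z) ∧
  (∀ x y, Q.unit ≤ e x y → Q.unit ≤ e y x → x = y)

/-- `D` is a directed `L`-subset of `(P, e)`. -/
def IsDirectedL (Q : CommQuantale L) {P : Type u} (e : P → P → L) (D : P → L) : Prop :=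
  (Q.unit ≤ ⨆ x, D x) ∧
  (∀ x y, Q.mul (D x) (D y) ≤ ⨆ z, Q.mul (Q.mul (D z) (e x z)) (e y z))

/-- `x₀` is the supremum `⊔A` of the `L`-subset `A`. -/
def IsSupL (Q : CommQuantale L) {P : Type u} (e : P → P → L) (A : P → L) (x₀ : P) : Prop :=
  ∀ y, e x₀ y = Q.subL A (fun x => e x y)

/-- `(P, e)` is an `L`-dcpo: every directed `L`-subset has a supremum. -/
def IsDcpoL (Q : CommQuantale L) {P : Type u} (e : P → P → L) : Prop :=
  ∀ D : P → L, Q.IsDirectedL e D → ∃ s, Q.IsSupL e D s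

/-- `⇓x : P → L`, i.e. `⇓x(y) = ⋀_{D directed} (e(x, ⊔D) → ⋁_d D(d) ⊗ e(y,d))`. -/
def wayBelow (Q : CommQuantale L) {P : Type u} (e : P → P → L) (x : P) : P → L := fun y =>
  ⨅ (D : P → L) (_ : Q.IsDirectedL e D) (s : P) (_ : Q.IsSupL e D s),
    Q.res (e x s) (⨆ d, Q.mul (D d) (e y d))

/-- `(P, e)` is a continuous `L`-dcpo. -/
def IsContinuousLDcpo (Q : CommQuantale L) {P : Type u} (e : P → P → L) : Prop :=
  Q.IsLOrder e ∧ Q.IsDcpoL e ∧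
  ∀ x, Q.IsDirectedL e (Q.wayBelow e x) ∧ Q.IsSupL e (Q.wayBelow e x) x

open Classical in
/-- `k(x)(y) = e(y,x)` if `y` is compact (i.e. `u ≤ ⇓y(y)`), else `0`. -/
noncomputable def kfun (Q : CommQuantale L) {P : Type u} (e : P → P → L) (x : P) : P → L :=
  fun y => if Q.unit ≤ Q.wayBelow e y y then e y x else ⊥

/-- `(P, e)` is an algebraic `L`-dcpo. -/
noncomputable def IsAlgebraicLDcpo (Q : CommQuantale L) {P : Type u} (e : P → P → L) : Prop :=
  Q.IsLOrder e ∧ Q.IsDcpoL e ∧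
  ∀ x, Q.IsDirectedL e (Q.kfun e x) ∧ Q.IsSupL e (Q.kfun e x) x

/-- `cl` is a generalized `L`-closure operator: (GC1) and (GC2). -/
def IsGenClosure (Q : CommQuantale L) {X : Type u} (cl : (X → L) → (X → L)) : Prop :=
  (∀ A B, Q.subL A B ≤ Q.subL (cl A) (cl B)) ∧
  (∀ A, cl (cl A) ≤ cl A)

/-- Interpolation conditions (IT1)-(IT3). -/
noncomputable def IsInterpolative (Q : CommQuantale L) {X : Type u}
    (cl : (X → L) → (X → L)) : Prop :=
  (∀ x, Q.unit ≤ ⨆ t, cl (Q.ux x) t) ∧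
  (∀ x y, cl (Q.ux x) y ≤ ⨆ t, Q.mul (cl (Q.ux x) t) (cl (Q.ux t) y)) ∧
  (∀ x a b, Q.mul (cl (Q.ux x) a) (cl (Q.ux x) b) ≤
    ⨆ t, Q.mul (Q.mul (cl (Q.ux x) t) (cl (Q.ux t) a)) (cl (Q.ux t) b))

/-- `U` is a directed closed set: (DC1)-(DC4). -/
noncomputable def IsDirClosed (Q : CommQuantale L) {X : Type u}
    (cl : (X → L) → (X → L)) (U : X → L) : Prop :=
  (Q.unit ≤ ⨆ x, U x) ∧
  (∀ x, U x ≤ Q.subL (cl (Q.ux x)) U) ∧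
  (∀ x, U x ≤ ⨆ y, Q.mul (U y) (cl (Q.ux y) x)) ∧
  (∀ x y, Q.mul (U x) (U y) ≤
    ⨆ z, Q.mul (Q.mul (U z) (cl (Q.ux z) x)) (cl (Q.ux z) y))

section Aux

variable {L : Type u} [CompleteLattice L] (Q : CommQuantale L)

lemma mul_iSup' {ι : Sort*} (a : L) (f : ι → L) :
    Q.mul a (⨆ i, f i) = ⨆ i, Q.mul a (f i) := by
  rw [iSup, Q.mul_sSup, iSup_range]

lemma mul_bot' (a : L) : Q.mul a ⊥ = ⊥ := by
  have := Q.mul_sSup a ∅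
  simpa using this

lemma mul_mono' {a b c d : L} (h1 : a ≤ c) (h2 : b ≤ d) :
    Q.mul a b ≤ Q.mul c d := by
  have step : ∀ (u : L) {v w : L}, v ≤ w → Q.mul u v ≤ Q.mul u w := by
    intro u v w hvw
    have : Q.mul u w = Q.mul u (sSup (Set.Iic w)) := by rw [csSup_Iic]
    rw [this, Q.mul_sSup]
    exact le_iSup₂_of_le v hvw le_rfl
  calc Q.mul a b ≤ Q.mul a d := step a h2
    _ = Q.mul d a := Q.mul_comm a d
    _ ≤ Q.mul d c := step d h1
    _ = Q.mul c d := Q.mul_comm d c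

lemma le_res' {a b c : L} (h : Q.mul a b ≤ c) : a ≤ Q.res b c := le_sSup h

lemma res_mul_le' (b c : L) : Q.mul (Q.res b c) b ≤ c := by
  rw [Q.mul_comm, CommQuantale.res, Q.mul_sSup]
  exact iSup₂_le fun s hs => by rw [Q.mul_comm]; exact hs

lemma mul_unit_left' (a : L) : Q.mul Q.unit a = a := by
  rw [Q.mul_comm, Q.mul_unit]

lemma res_unit' (c : L) : Q.res Q.unit c = c := by
  refine le_antisymm ?_ (Q.le_res' (by rw [Q.mul_unit]))
  have := Q.res_mul_le' Q.unit c
  rwa [Q.mul_unit] at this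

/-- Instantiating the infimum in `wayBelow`. -/
lemma wayBelow_le' {P : Type u} (e : P → P → L) (x y : P)
    (D : P → L) (hD : Q.IsDirectedL e D) (s : P) (hs : Q.IsSupL e D s) :
    Q.wayBelow e x y ≤ Q.res (e x s) (⨆ d, Q.mul (D d) (e y d)) :=
  iInf_le_of_le D (iInf_le_of_le hD (iInf₂_le s hs))

/-- For a compact `d`, `e d s ≤ ⨆ d', D d' ⊗ e d d'` when `s = ⊔D`. -/
lemma compact_le_sup' (hu : Q.unit = (⊤ : L)) {P : Type u} (e : P → P → L)
    {d : P} (hd : Q.unit ≤ Q.wayBelow e d d)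
    (D : P → L) (hD : Q.IsDirectedL e D) (s : P) (hs : Q.IsSupL e D s) :
    e d s ≤ ⨆ d', Q.mul (D d') (e d d') := by
  have h1 : Q.unit ≤ Q.res (e d s) (⨆ d', Q.mul (D d') (e d d')) :=
    hd.trans (Q.wayBelow_le' e d d D hD s hs)
  calc e d s = Q.mul Q.unit (e d s) := (Q.mul_unit_left' _).symm
    _ ≤ Q.mul (Q.res (e d s) (⨆ d', Q.mul (D d') (e d d'))) (e d s) :=
        Q.mul_mono' h1 le_rfl
    _ ≤ _ := Q.res_mul_le' _ _

/-- If `d` is compact, then `e d x ≤ ⇓x(d)`. -/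
lemma compact_e_le_wayBelow' (hu : Q.unit = (⊤ : L)) {P : Type u} (e : P → P → L)
    (hord : Q.IsLOrder e) {d : P} (hd : Q.unit ≤ Q.wayBelow e d d) (x : P) :
    e d x ≤ Q.wayBelow e x d := by
  refine le_iInf fun D => le_iInf fun hD => le_iInf fun s => le_iInf fun hs => ?_
  refine Q.le_res' ?_
  calc Q.mul (e d x) (e x s) ≤ e d s := hord.2.1 d x s
    _ ≤ ⨆ d', Q.mul (D d') (e d d') := Q.compact_le_sup' hu e hd D hD s hs

/-- If `d` is compact, then `e a d ≤ ⇓d(a)`. -/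
lemma e_compact_le_wayBelow' (hu : Q.unit = (⊤ : L)) {P : Type u} (e : P → P → L)
    (hord : Q.IsLOrder e) {d : P} (hd : Q.unit ≤ Q.wayBelow e d d) (a : P) :
    e a d ≤ Q.wayBelow e d a := by
  refine le_iInf fun D => le_iInf fun hD => le_iInf fun s => le_iInf fun hs => ?_
  refine Q.le_res' ?_
  calc Q.mul (e a d) (e d s)
      ≤ Q.mul (e a d) (⨆ d', Q.mul (D d') (e d d')) :=
        Q.mul_mono' le_rfl (Q.compact_le_sup' hu e hd D hD s hs)
    _ = ⨆ d', Q.mul (e a d) (Q.mul (D d') (e d d')) := Q.mul_iSup' _ _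
    _ ≤ ⨆ d', Q.mul (D d') (e a d') := by
        refine iSup_mono fun d' => ?_
        calc Q.mul (e a d) (Q.mul (D d') (e d d'))
            = Q.mul (D d') (Q.mul (e a d) (e d d')) := by
              rw [Q.mul_comm (e a d), Q.mul_assoc, Q.mul_comm (e d d')]
          _ ≤ Q.mul (D d') (e a d') := Q.mul_mono' le_rfl (hord.2.1 a d d')

end Aux

end CommQuantale
open CommQuantale in
/-- Over an integral quantale, for an algebraic L-dcpo (P,e) equipped with
⟨A⟩ = ⋁ₓ A(x) ⊗ ⇓x, the set K(P) of compact elements is a dense subspace: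
⟨1_x⟩(a) ≤ ⋁_{y ∈ K(P)} ⟨1_x⟩(y) ⊗ ⟨1_y⟩(a). -/
theorem stmt17 {L P : Type u} [CompleteLattice L] (Q : CommQuantale L)
    (hu : Q.unit = (⊤ : L))
    (e : P → P → L) (hord : Q.IsLOrder e) (hdcpo : Q.IsDcpoL e)
    (halg : ∀ x, Q.IsDirectedL e (Q.kfun e x) ∧ Q.IsSupL e (Q.kfun e x) x) :
    ∀ x a : P,
      (fun A : P → L => fun t => ⨆ z, Q.mul (A z) (Q.wayBelow e z t)) (Q.ux x) a ≤
        ⨆ y : P, ⨆ (_ : Q.unit ≤ Q.wayBelow e y y),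
          Q.mul
            ((fun A : P → L => fun t => ⨆ z, Q.mul (A z) (Q.wayBelow e z t)) (Q.ux x) y)
            ((fun A : P → L => fun t => ⨆ z, Q.mul (A z) (Q.wayBelow e z t)) (Q.ux y) a) := by
  intro x a
  simp only []
  -- First: the LHS equals ⇓x(a)
  have hux : ∀ (w : P) (f : P → L), (⨆ z, Q.mul (Q.ux w z) (f z)) = f w := by
    intro w f
    refine le_antisymm (iSup_le fun z => ?_) ?_
    · by_cases hz : z = w
      · subst hz; rw [ux, if_pos rfl, Q.mul_unit_left']
      · rw [ux, if_neg hz, Q.mul_comm, Q.mul_bot']; exact bot_le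
    · refine le_iSup_of_le w ?_
      rw [ux, if_pos rfl, Q.mul_unit_left']
  rw [hux x]
  -- ⇓x(a) ≤ ⨆ d, k(x)(d) ⊗ e(a,d)
  have hexx : e x x = Q.unit := by
    rw [hu]; exact le_antisymm le_top (hu ▸ hord.1 x)
  have h1 : Q.wayBelow e x a ≤ ⨆ d, Q.mul (Q.kfun e x d) (e a d) := by
    have := Q.wayBelow_le' e x a (Q.kfun e x) (halg x).1 x (halg x).2
    rwa [hexx, Q.res_unit'] at this
  refine h1.trans (iSup_le fun d => ?_)
  by_cases hd : Q.unit ≤ Q.wayBelow e d d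
  · rw [kfun, if_pos hd]
    have hA : e d x ≤ Q.wayBelow e x d := Q.compact_e_le_wayBelow' hu e hord hd x
    have hB : e a d ≤ Q.wayBelow e d a := Q.e_compact_le_wayBelow' hu e hord hd a
    refine le_iSup_of_le d (le_iSup_of_le hd ?_)
    rw [hux x, hux d]
    exact Q.mul_mono' hA hB
  · rw [kfun, if_neg hd, Q.mul_comm, Q.mul_bot']
    exact bot_le
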